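/- arXiv:0802.2044 — 2 statements merged into one kernel-verified Lean document; each statement's English description precedes it below -/
import Mathlib

section
/- Let X be a group, K an X-module, and suppose μ : (K⋊X) ×_X (K⋊X) → K⋊X is a group homomorphism over X making π : K⋊X → X a group object in groups over X. Then there exists a derivation ξ : X → K such that μ((k,x),(k',x)) = (k + k' + ξ(x), x) for all k, k' ∈ K and x ∈ X. -/
/-- A derivation with respect to a homomorphism `p : Y →* X`, valued in an `X`-module `K`. -/
def IsDeriv {Y X K : Type*} [Group Y] [Group X] [AddCommGroup K] [DistribMulAction X K]
    (p : Y →* X) (ξ : Y → K) : Prop :=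
  ∀ y₁ y₂ : Y, ξ (y₁ * y₂) = ξ y₁ + p y₁ • ξ y₂

/-- The semidirect product `K ⋊ X` of a group `X` by an `X`-module `K`. -/
@[ext]
structure SDP (K X : Type*) where
  k : K
  x : X

namespace SDP

variable {K X : Type*} [Group X] [AddCommGroup K] [DistribMulAction X K]

instance : Mul (SDP K X) := ⟨fun a b => ⟨a.k + a.x • b.k, a.x * b.x⟩⟩
instance : One (SDP K X) := ⟨⟨0, 1⟩⟩
instance : Inv (SDP K X) := ⟨fun a => ⟨-(a.x⁻¹ • a.k), a.x⁻¹⟩⟩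

@[simp] theorem mul_def (a b : SDP K X) : a * b = ⟨a.k + a.x • b.k, a.x * b.x⟩ := rfl
@[simp] theorem one_def : (1 : SDP K X) = ⟨0, 1⟩ := rfl
@[simp] theorem inv_def (a : SDP K X) : a⁻¹ = ⟨-(a.x⁻¹ • a.k), a.x⁻¹⟩ := rfl

instance : Group (SDP K X) where
  mul := (· * ·)
  one := 1
  inv := Inv.inv
  mul_assoc a b c := by ext <;> simp [mul_smul, smul_add, add_assoc, mul_assoc]
  one_mul a := by ext <;> simp
  mul_one a := by ext <;> simp
  inv_mul_cancel a := by ext <;> simp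

/-- The projection `K ⋊ X →* X`. -/
def proj (K X : Type*) [Group X] [AddCommGroup K] [DistribMulAction X K] :
    SDP K X →* X where
  toFun a := a.x
  map_one' := rfl
  map_mul' _ _ := rfl

end SDP

/-!
Over the identity the two multiplications of the fibre `K × {1}`, namely `μ` and the group law
`+`, satisfy the interchange law and share the unit `0` (the unit section is a homomorphism, so
it sends `1` to `(0, 1)`), hence by Eckmann–Hilton they coincide.
Since `(k, x) = (k, 1) · (0, x)`, interchange then writes `μ((k, x), (k', x))` as
`(k + k', 1) · μ((0, x), (0, x))`, and `ξ x` is the `K`-component of `μ((0, x), (0, x))`;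
interchange applied to `(0, x) · (0, y)` is exactly the derivation rule for `ξ`.
-/

namespace SDP

variable {K X : Type*} [Group X] [AddCommGroup K] [DistribMulAction X K]
  {m : SDP K X → SDP K X → SDP K X}

def diagShift (m : SDP K X → SDP K X → SDP K X) (x : X) : K :=
  (m ⟨0, x⟩ ⟨0, x⟩).k

theorem mk_one_mul_mk_zero (k : K) (x : X) : (⟨k, 1⟩ : SDP K X) * ⟨0, x⟩ = ⟨k, x⟩ := by
  simp

theorem mul_mk_one_eq_add (hover : ∀ a b : SDP K X, a.x = b.x → (m a b).x = a.x)
    (hhom : ∀ a b c d : SDP K X, a.x = b.x → c.x = d.x → m (a * c) (b * d) = m a b * m c d)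
    (hright : ∀ k : K, m ⟨k, 1⟩ ⟨0, 1⟩ = ⟨k, 1⟩) (hleft : ∀ k : K, m ⟨0, 1⟩ ⟨k, 1⟩ = ⟨k, 1⟩)
    (k l : K) : m ⟨k, 1⟩ ⟨l, 1⟩ = ⟨k + l, 1⟩ := by
  have hunital : EckmannHilton.IsUnital (fun k l : K => (m ⟨k, 1⟩ ⟨l, 1⟩).k) 0 :=
    { left_id k := by simp only [hleft], right_id k := by simp only [hright] }
  have hinterchange : ∀ a b c d : K,
      (m ⟨a + b, 1⟩ ⟨c + d, 1⟩).k = (m ⟨a, 1⟩ ⟨c, 1⟩).k + (m ⟨b, 1⟩ ⟨d, 1⟩).k := by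
    intro a b c d
    have h := congrArg SDP.k (hhom ⟨a, 1⟩ ⟨c, 1⟩ ⟨b, 1⟩ ⟨d, 1⟩ rfl rfl)
    simpa [hover ⟨a, 1⟩ ⟨c, 1⟩ rfl] using h
  have heq := EckmannHilton.mul hunital EckmannHilton.AddZeroClass.IsUnital hinterchange
  ext
  · exact congrFun (congrFun heq k) l
  · exact hover _ _ rfl

theorem mul_mk_mk_eq (hover : ∀ a b : SDP K X, a.x = b.x → (m a b).x = a.x)
    (hhom : ∀ a b c d : SDP K X, a.x = b.x → c.x = d.x → m (a * c) (b * d) = m a b * m c d)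
    (hone : ∀ k l : K, m ⟨k, 1⟩ ⟨l, 1⟩ = ⟨k + l, 1⟩) (k l : K) (x : X) :
    m ⟨k, x⟩ ⟨l, x⟩ = ⟨k + l + diagShift m x, x⟩ := by
  have hdiag : m ⟨0, x⟩ ⟨0, x⟩ = ⟨diagShift m x, x⟩ := SDP.ext rfl (hover _ _ rfl)
  rw [← mk_one_mul_mk_zero k, ← mk_one_mul_mk_zero l,
    hhom ⟨k, 1⟩ ⟨l, 1⟩ ⟨0, x⟩ ⟨0, x⟩ rfl rfl, hone, hdiag]
  simp

theorem isDeriv_diagShift (hover : ∀ a b : SDP K X, a.x = b.x → (m a b).x = a.x)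
    (hhom : ∀ a b c d : SDP K X, a.x = b.x → c.x = d.x → m (a * c) (b * d) = m a b * m c d) :
    IsDeriv (MonoidHom.id X) (diagShift m) := by
  intro x y
  have h := congrArg SDP.k (hhom ⟨0, x⟩ ⟨0, x⟩ ⟨0, y⟩ ⟨0, y⟩ rfl rfl)
  simpa [diagShift, hover ⟨0, x⟩ ⟨0, x⟩ rfl] using h

end SDP

theorem stmt8_general {X K : Type*} [Group X] [AddCommGroup K] [DistribMulAction X K]
    (m : SDP K X → SDP K X → SDP K X)
    (hover : ∀ a b : SDP K X, a.x = b.x → (m a b).x = a.x)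
    (hhom : ∀ a b c d : SDP K X, a.x = b.x → c.x = d.x → m (a * c) (b * d) = m a b * m c d)
    (e : X →* SDP K X)
    (hunitr : ∀ a : SDP K X, m a (e a.x) = a)
    (hunitl : ∀ a : SDP K X, m (e a.x) a = a) :
    ∃ xi : X → K, IsDeriv (MonoidHom.id X) xi ∧
      ∀ (k k' : K) (x : X), m ⟨k, x⟩ ⟨k', x⟩ = ⟨k + k' + xi x, x⟩ := by
  have hright (k : K) : m ⟨k, 1⟩ ⟨0, 1⟩ = ⟨k, 1⟩ := by simpa using hunitr ⟨k, 1⟩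
  have hleft (k : K) : m ⟨0, 1⟩ ⟨k, 1⟩ = ⟨k, 1⟩ := by simpa using hunitl ⟨k, 1⟩
  exact ⟨SDP.diagShift m, SDP.isDeriv_diagShift hover hhom,
    SDP.mul_mk_mk_eq hover hhom (SDP.mul_mk_one_eq_add hover hhom hright hleft)⟩

/-- any group object multiplication over `X` on `π : K ⋊ X → X` is given
by `μ((k,x),(k',x)) = (k + k' + ξ x, x)` for some derivation `ξ : X → K`. -/
theorem stmt8 {X K : Type*} [Group X] [AddCommGroup K] [DistribMulAction X K]
    (m : SDP K X → SDP K X → SDP K X)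
    (hover : ∀ a b : SDP K X, a.x = b.x → (m a b).x = a.x)
    (hhom : ∀ a b c d : SDP K X, a.x = b.x → c.x = d.x → m (a * c) (b * d) = m a b * m c d)
    (hassoc : ∀ a b c : SDP K X, a.x = b.x → b.x = c.x → m (m a b) c = m a (m b c))
    (e : X →* SDP K X) (hsec : ∀ x : X, (e x).x = x)
    (hunitr : ∀ a : SDP K X, m a (e a.x) = a)
    (hunitl : ∀ a : SDP K X, m (e a.x) a = a)
    (i : SDP K X →* SDP K X) (hiover : ∀ a : SDP K X, (i a).x = a.x)
    (hinv : ∀ a : SDP K X, m a (i a) = e a.x) :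
    ∃ xi : X → K, IsDeriv (MonoidHom.id X) xi ∧
      ∀ (k k' : K) (x : X), m ⟨k, x⟩ ⟨k', x⟩ = ⟨k + k' + xi x, x⟩ :=
  stmt8_general m hover hhom e hunitr hunitl
end

section
/- Let p : Y → X be a group object in the category of groups over X, with unit section e : X → Y. Then K := ker(p) is an abelian subgroup of Y, X acts on K by x · k = e(x) k e(x)⁻¹, making K an X-module, and the map K ⋊ X → Y, (k, x) ↦ k · e(x), is a group isomorphism over X. -/
/-! On `ker p` the fibrewise multiplication `m` and the group law both have unit `1`
(as `e 1 = 1`) and satisfy the interchange law `m (a * c) (b * d) = m a b * m c d`, so by the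
Eckmann–Hilton argument they coincide and are commutative. The remaining claims hold for any split
epimorphism: every `y` factors uniquely as `(y * (e (p y))⁻¹) * e (p y)` with the first factor in
the kernel. -/

section EckmannHilton

variable {Y X : Type*} [Group Y] [Group X] {p : Y →* X} {m : Y → Y → Y} {e : X →* Y}

theorem apply_one_right_of_mem_ker (hunitr : ∀ y : Y, m y (e (p y)) = y) {a : Y}
    (ha : a ∈ p.ker) : m a 1 = a := by
  simpa [MonoidHom.mem_ker.mp ha] using hunitr a

theorem apply_one_left_of_mem_ker (hunitl : ∀ y : Y, m (e (p y)) y = y) {a : Y}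
    (ha : a ∈ p.ker) : m 1 a = a := by
  simpa [MonoidHom.mem_ker.mp ha] using hunitl a

theorem mul_comm_of_mem_ker
    (hhom : ∀ a b c d : Y, p a = p b → p c = p d → m (a * c) (b * d) = m a b * m c d)
    (hunitr : ∀ y : Y, m y (e (p y)) = y) (hunitl : ∀ y : Y, m (e (p y)) y = y)
    {a b : Y} (ha : a ∈ p.ker) (hb : b ∈ p.ker) : a * b = b * a := by
  rw [MonoidHom.mem_ker] at ha hb
  calc a * b = m a 1 * m 1 b := by
        rw [apply_one_right_of_mem_ker hunitr ha, apply_one_left_of_mem_ker hunitl hb]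
    _ = m (a * 1) (1 * b) := (hhom a 1 1 b (by simp [ha]) (by simp [hb])).symm
    _ = m (1 * a) (b * 1) := by simp only [mul_one, one_mul]
    _ = m 1 b * m a 1 := hhom 1 b a 1 (by simp [hb]) (by simp [ha])
    _ = b * a := by rw [apply_one_right_of_mem_ker hunitr ha, apply_one_left_of_mem_ker hunitl hb]

end EckmannHilton

section Splitting

variable {Y X : Type*} [Group Y] [Group X] {p : Y →* X} {e : X → Y}

theorem map_mul_section_of_mem_ker (hsec : ∀ x : X, p (e x) = x) {a : Y} (ha : a ∈ p.ker)
    (x : X) : p (a * e x) = x := by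
  rw [map_mul, MonoidHom.mem_ker.mp ha, hsec, one_mul]

theorem bijective_mul_section (hsec : ∀ x : X, p (e x) = x) :
    Function.Bijective (fun q : p.ker × X => (q.1 : Y) * e q.2) := by
  refine Function.bijective_iff_has_inverse.mpr
    ⟨fun y => (⟨y * (e (p y))⁻¹, by simp [hsec]⟩, p y), ?_, fun y => by simp⟩
  rintro ⟨a, x⟩
  ext <;> simp [map_mul_section_of_mem_ker hsec a.2]

end Splitting

theorem stmt10_general {Y X : Type*} [Group Y] [Group X] (p : Y →* X)
    (m : Y → Y → Y)
    (hhom : ∀ a b c d : Y, p a = p b → p c = p d → m (a * c) (b * d) = m a b * m c d)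
    (e : X →* Y) (hsec : ∀ x : X, p (e x) = x)
    (hunitr : ∀ y : Y, m y (e (p y)) = y)
    (hunitl : ∀ y : Y, m (e (p y)) y = y) :
    (∀ a b : Y, a ∈ p.ker → b ∈ p.ker → a * b = b * a) ∧
    (∀ (x : X) (a : Y), a ∈ p.ker → e x * a * (e x)⁻¹ ∈ p.ker) ∧
    Function.Bijective (fun q : p.ker × X => (q.1 : Y) * e q.2) ∧
    (∀ (a b : p.ker) (x x' : X),
      ((a : Y) * e x) * ((b : Y) * e x') = ((a : Y) * (e x * (b : Y) * (e x)⁻¹)) * e (x * x')) ∧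
    (∀ (a : p.ker) (x : X), p ((a : Y) * e x) = x) :=
  ⟨fun _ _ => mul_comm_of_mem_ker hhom hunitr hunitl,
    fun x _ ha => p.normal_ker.conj_mem _ ha (e x),
    bijective_mul_section hsec,
    fun a b x x' => by simp only [map_mul]; group,
    fun a => map_mul_section_of_mem_ker hsec a.2⟩

/-- for a group object `p : Y → X` in groups over `X` with unit section
`e`, the kernel `K = ker p` is abelian, `X` acts on it by `x • k = e x * k * (e x)⁻¹`,
and `(k, x) ↦ k * e x` is a group isomorphism `K ⋊ X → Y` over `X`. -/
theorem stmt10 {Y X : Type*} [Group Y] [Group X] (p : Y →* X)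
    (m : Y → Y → Y)
    (hover : ∀ a b : Y, p a = p b → p (m a b) = p a)
    (hhom : ∀ a b c d : Y, p a = p b → p c = p d → m (a * c) (b * d) = m a b * m c d)
    (hassoc : ∀ a b c : Y, p a = p b → p b = p c → m (m a b) c = m a (m b c))
    (e : X →* Y) (hsec : ∀ x : X, p (e x) = x)
    (hunitr : ∀ y : Y, m y (e (p y)) = y)
    (hunitl : ∀ y : Y, m (e (p y)) y = y)
    (i : Y →* Y) (hiover : ∀ y : Y, p (i y) = p y)
    (hinv : ∀ y : Y, m y (i y) = e (p y)) :
    (∀ a b : Y, a ∈ p.ker → b ∈ p.ker → a * b = b * a) ∧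
    (∀ (x : X) (a : Y), a ∈ p.ker → e x * a * (e x)⁻¹ ∈ p.ker) ∧
    Function.Bijective (fun q : p.ker × X => (q.1 : Y) * e q.2) ∧
    (∀ (a b : p.ker) (x x' : X),
      ((a : Y) * e x) * ((b : Y) * e x') = ((a : Y) * (e x * (b : Y) * (e x)⁻¹)) * e (x * x')) ∧
    (∀ (a : p.ker) (x : X), p ((a : Y) * e x) = x) :=
  stmt10_general p m hhom e hsec hunitr hunitl
end
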